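/- arXiv:1805.04890 — 6 statements merged into one kernel-verified Lean document; each statement's English description precedes it below -/
import Mathlib

section
/- There is no Cartesian bi-magic design on the (1,1,r)-board when r ≡ 1 (mod 4). Precisely: if r ≡ 1 (mod 4), there is no bijection f from the 2r+1 squares (one square PQ, rows PR and QR of length r) to [1, 2r+1] such that the multiset {c₁, c₂, c₃} takes exactly 2 distinct values, where c₁ = f(PQ)+Σf(PR), c₂ = f(PQ)+Σf(QR), and c₃ is the common value of all column sums f(PR)ₖ + f(QR)ₖ (1 ≤ k ≤ r) (required to be constant across columns). -/
/-!
The labels sum to `(r + 1)(2r + 1)` and the columns to `r c₃`, so the corner label is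
`(r + 1)(2r + 1) - r c₃ ∈ [1, 2r + 1]`, which leaves `c₃ = 2r + 1, 2r + 2, 2r + 3` with corner
`2r + 1, r + 1, 1`. For `r ≡ 1 (mod 4)` every coincidence among `c₁, c₂, c₃` fails.
If `c₃` is odd, equal row sums would make `r c₃` even, and `c₁ = c₃` forces a row sum `0` or
`2r + 2`; the latter is below the least sum `r(r + 3)/2` of `r` distinct labels `≥ 2` once
`r ≥ 5`, and above the largest label `3` when `r = 1`.
If `c₃ = 2r + 2`, each column holds two labels of equal parity, so the `r + 1` odd labels
outside the even corner split as `(r + 1)/2` per row: both row sums are odd, while `c₃` and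
`r(r + 1)` are even.
-/

open Finset

lemma Fin.sum_val_add_one_mul_two (n : ℕ) : (∑ i : Fin n, ((i : ℕ) + 1)) * 2 = n * (n + 1) := by
  induction n with
  | zero => simp
  | succ n ih =>
    rw [Fin.sum_univ_castSucc]
    simp only [Fin.val_castSucc, Fin.val_last]
    nlinarith

lemma Fin.sum_val_add_one_mod_two (n : ℕ) : ∑ i : Fin n, ((i : ℕ) + 1) % 2 = (n + 1) / 2 := by
  induction n with
  | zero => simp
  | succ n ih =>
    rw [Fin.sum_univ_castSucc]
    simp only [Fin.val_castSucc, Fin.val_last, ih]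
    omega

lemma Finset.sum_range_add_le_sum_of_injective {ι : Type*} [Fintype ι] {g : ι → ℕ}
    (hg : Function.Injective g) {c : ℕ} (hc : ∀ i, c ≤ g i) :
    ∑ n ∈ range (Fintype.card ι), (c + n) ≤ ∑ i, g i := by
  have hg' : Function.Injective fun i => (g i : ℤ) := Nat.cast_injective.comp hg
  have key := Finset.sum_range_le_sum (s := univ.image fun i => (g i : ℤ)) (c := c)
    (by simpa using hc)
  rw [card_image_of_injective _ hg', sum_image fun i _ j _ h => hg' h, card_univ] at key
  exact_mod_cast key

abbrev BoardLabelling (r : ℕ) : Type := (Unit ⊕ Fin r ⊕ Fin r) ≃ Fin (2 * r + 1)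

section Board

variable {r c : ℕ}

def labelPQ (e : BoardLabelling r) : ℕ := (e (.inl ())).val + 1

def labelPR (e : BoardLabelling r) (k : Fin r) : ℕ := (e (.inr (.inl k))).val + 1

def labelQR (e : BoardLabelling r) (k : Fin r) : ℕ := (e (.inr (.inr k))).val + 1

def swapRows (e : BoardLabelling r) : BoardLabelling r :=
  (Equiv.sumCongr (Equiv.refl Unit) (Equiv.sumComm _ _)).trans e

variable {e : BoardLabelling r}

lemma labelPQ_add_sum_add_sum (e : BoardLabelling r) :
    labelPQ e + ∑ k, labelPR e k + ∑ k, labelQR e k = (r + 1) * (2 * r + 1) := by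
  have h := Fin.sum_val_add_one_mul_two (2 * r + 1)
  rw [← e.sum_comp (fun i : Fin (2 * r + 1) => (i : ℕ) + 1), Fintype.sum_sum_type,
    Fintype.sum_sum_type, Fintype.sum_unique] at h
  simp only [labelPQ, labelPR, labelQR]
  linarith

lemma labelPQ_mod_two_add_sum_add_sum (e : BoardLabelling r) :
    labelPQ e % 2 + ∑ k, labelPR e k % 2 + ∑ k, labelQR e k % 2 = r + 1 := by
  have h := Fin.sum_val_add_one_mod_two (2 * r + 1)
  rw [← e.sum_comp (fun i : Fin (2 * r + 1) => ((i : ℕ) + 1) % 2), Fintype.sum_sum_type,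
    Fintype.sum_sum_type, Fintype.sum_unique] at h
  rw [show (2 * r + 1 + 1) / 2 = r + 1 by omega] at h
  simp only [labelPQ, labelPR, labelQR]
  linarith

lemma sum_labelPR_add_sum_labelQR (hcol : ∀ k, labelPR e k + labelQR e k = c) :
    ∑ k, labelPR e k + ∑ k, labelQR e k = r * c := by
  simp [← sum_add_distrib, hcol]

lemma labelPQ_add_mul_eq (hcol : ∀ k, labelPR e k + labelQR e k = c) :
    labelPQ e + r * c = (r + 1) * (2 * r + 1) := by
  linarith [labelPQ_add_sum_add_sum e, sum_labelPR_add_sum_labelQR hcol]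

lemma colSum_cases (hr : 0 < r) (hcol : ∀ k, labelPR e k + labelQR e k = c) :
    c = 2 * r + 1 ∧ labelPQ e = 2 * r + 1 ∨ c = 2 * r + 2 ∧ labelPQ e = r + 1 ∨
      c = 2 * r + 3 ∧ labelPQ e = 1 := by
  have h := labelPQ_add_mul_eq hcol
  have hPQ : 1 ≤ labelPQ e ∧ labelPQ e ≤ 2 * r + 1 := ⟨by simp [labelPQ], (e (.inl ())).isLt⟩
  have hlt : c < 2 * r + 4 := by
    by_contra! hc
    nlinarith [Nat.mul_le_mul_left r hc]
  have hgt : 2 * r < c := by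
    by_contra! hc
    nlinarith [Nat.mul_le_mul_left r hc]
  obtain rfl | rfl | rfl : c = 2 * r + 1 ∨ c = 2 * r + 2 ∨ c = 2 * r + 3 := by omega
  · exact .inl ⟨rfl, by linarith⟩
  · exact .inr (.inl ⟨rfl, by linarith⟩)
  · exact .inr (.inr ⟨rfl, by linarith⟩)

lemma sum_labelPR_mod_two (hmod : r % 4 = 1)
    (hcol : ∀ k, labelPR e k + labelQR e k = 2 * r + 2) :
    (∑ k, labelPR e k) % 2 = 1 := by
  have hPQ : labelPQ e = r + 1 := by linarith [labelPQ_add_mul_eq hcol]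
  have hodd := labelPQ_mod_two_add_sum_add_sum e
  have hsame : ∑ k, labelPR e k % 2 = ∑ k, labelQR e k % 2 :=
    sum_congr rfl fun k _ => by have := hcol k; omega
  rw [sum_nat_mod]
  omega

lemma le_sum_labelPR (e : BoardLabelling r) : r ≤ ∑ k, labelPR e k := by
  simpa using card_nsmul_le_sum univ (labelPR e) 1 fun k _ => Nat.le_add_left 1 _

lemma sum_labelPR_le (e : BoardLabelling r) : ∑ k, labelPR e k ≤ r * (2 * r + 1) := by
  simpa using sum_le_card_nsmul univ (labelPR e) (2 * r + 1) fun k _ => (e _).isLt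

lemma two_mul_sum_labelPR_ge (hPQ : labelPQ e = 1) : r * (r + 3) ≤ 2 * ∑ k, labelPR e k := by
  have hinj : Function.Injective (labelPR e) := fun k l h => by
    simpa [labelPR, Fin.val_inj] using h
  have h2 : ∀ k, 2 ≤ labelPR e k := fun k => by
    have hne : e (.inr (.inl k)) ≠ e (.inl ()) := by simp
    simp only [labelPQ, labelPR] at hPQ ⊢
    omega
  have h := sum_range_add_le_sum_of_injective hinj h2
  rw [Fintype.card_fin, sum_add_distrib, sum_const, card_range, smul_eq_mul] at h
  have hgauss := sum_range_id_mul_two (r + 1)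
  rw [sum_range_succ, Nat.add_sub_cancel] at hgauss
  nlinarith

lemma sum_labelPR_ne_sum_labelQR (hmod : r % 4 = 1)
    (hcol : ∀ k, labelPR e k + labelQR e k = c) :
    ∑ k, labelPR e k ≠ ∑ k, labelQR e k := by
  intro h
  have hrows := sum_labelPR_add_sum_labelQR hcol
  obtain ⟨rfl, -⟩ | ⟨rfl, -⟩ | ⟨rfl, -⟩ := colSum_cases (by omega) hcol
  · ring_nf at hrows; omega
  · have hodd := sum_labelPR_mod_two hmod hcol
    have heven := Nat.even_mul_succ_self r
    rw [Nat.even_iff] at heven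
    rw [← h, show r * (2 * r + 2) = 2 * (r * (r + 1)) by ring] at hrows
    omega
  · ring_nf at hrows; omega

lemma labelPQ_add_sum_labelPR_ne (hmod : r % 4 = 1)
    (hcol : ∀ k, labelPR e k + labelQR e k = c) :
    labelPQ e + ∑ k, labelPR e k ≠ c := by
  intro h
  obtain ⟨rfl, hPQ⟩ | ⟨rfl, hPQ⟩ | ⟨rfl, hPQ⟩ := colSum_cases (by omega) hcol
  · have := le_sum_labelPR e
    omega
  · have := sum_labelPR_mod_two hmod hcol
    omega
  · have hlb := two_mul_sum_labelPR_ge hPQ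
    have hub := sum_labelPR_le e
    have hr : r ≤ 2 := by nlinarith
    obtain rfl : r = 1 := by omega
    omega

end Board

theorem stmt6_general (r : ℕ) (hmod : r % 4 = 1) :
    ¬ ∃ (e : (Unit ⊕ Fin r ⊕ Fin r) ≃ Fin (2 * r + 1)) (c₁ c₂ c₃ : ℕ),
      c₁ = ((e (Sum.inl ())).val + 1) + ∑ k, ((e (Sum.inr (Sum.inl k))).val + 1) ∧
      c₂ = ((e (Sum.inl ())).val + 1) + ∑ k, ((e (Sum.inr (Sum.inr k))).val + 1) ∧
      (∀ k : Fin r,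
        ((e (Sum.inr (Sum.inl k))).val + 1) + ((e (Sum.inr (Sum.inr k))).val + 1) = c₃) ∧
      ({c₁, c₂, c₃} : Finset ℕ).card = 2 := by
  rintro ⟨e, c₁, c₂, c₃, hc₁, hc₂, hcol, hcard⟩
  have hcoincide : c₁ = c₂ ∨ c₁ = c₃ ∨ c₂ = c₃ := by
    by_contra! h
    have := card_eq_three.mpr ⟨_, _, _, h.1, h.2.1, h.2.2, rfl⟩
    omega
  subst hc₁ hc₂
  obtain h | h | h := hcoincide
  · exact sum_labelPR_ne_sum_labelQR hmod hcol (Nat.add_left_cancel h)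
  · exact labelPQ_add_sum_labelPR_ne hmod hcol h
  · exact labelPQ_add_sum_labelPR_ne (e := swapRows e) hmod
      (fun k => (add_comm _ _).trans (hcol k)) h

/-- No Cartesian bi-magic design on the `(1,1,r)`-board when `r ≡ 1 (mod 4)`. -/
theorem stmt6 (r : ℕ) (hr : 0 < r) (hmod : r % 4 = 1) :
    ¬ ∃ (e : (Unit ⊕ Fin r ⊕ Fin r) ≃ Fin (2 * r + 1)) (c₁ c₂ c₃ : ℕ),
      c₁ = ((e (Sum.inl ())).val + 1) + ∑ k, ((e (Sum.inr (Sum.inl k))).val + 1) ∧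
      c₂ = ((e (Sum.inl ())).val + 1) + ∑ k, ((e (Sum.inr (Sum.inr k))).val + 1) ∧
      (∀ k : Fin r,
        ((e (Sum.inr (Sum.inl k))).val + 1) + ((e (Sum.inr (Sum.inr k))).val + 1) = c₃) ∧
      ({c₁, c₂, c₃} : Finset ℕ).card = 2 :=
  stmt6_general r hmod
end

section
/- If a (p, p, pr)-board is Cartesian magic for positive integers p and r, then r = 1. -/
/-!
Adding the row and column conditions and subtracting the fibre conditions gives
`2 · s(PQ) + pr · m = 2p · m`. Since every entry of `PQ` is positive, `s(PQ) > 0`,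
so `pr < 2p`, i.e. `r < 2`.
-/

open Finset

structure IsCartesianMagic {α β γ M : Type*} [Fintype α] [Fintype β] [Fintype γ]
    [AddCommMonoid M] (A : α → β → M) (B : α → γ → M) (C : β → γ → M) (m : M) : Prop where
  row_sum : ∀ i, ∑ j, A i j + ∑ k, B i k = m
  col_sum : ∀ j, ∑ i, A i j + ∑ k, C j k = m
  fibre_sum : ∀ k, ∑ i, B i k + ∑ j, C j k = m

namespace IsCartesianMagic

variable {α β γ M : Type*} [Fintype α] [Fintype β] [Fintype γ] [AddCommMonoid M]
  {A : α → β → M} {B : α → γ → M} {C : β → γ → M} {m : M}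

theorem two_nsmul_sum_add_card_nsmul (h : IsCartesianMagic A B C m) :
    2 • ∑ i, ∑ j, A i j + Fintype.card γ • m = Fintype.card α • m + Fintype.card β • m := by
  have hAB : ∑ i, ∑ j, A i j + ∑ i, ∑ k, B i k = Fintype.card α • m := by
    simp [← sum_add_distrib, h.row_sum]
  have hAC : ∑ i, ∑ j, A i j + ∑ j, ∑ k, C j k = Fintype.card β • m := by
    simp [sum_comm (f := A), ← sum_add_distrib, h.col_sum]
  have hBC : ∑ i, ∑ k, B i k + ∑ j, ∑ k, C j k = Fintype.card γ • m := by
    simp [sum_comm (f := B), sum_comm (f := C), ← sum_add_distrib, h.fibre_sum]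
  rw [← hAB, ← hAC, ← hBC, two_nsmul]
  abel

end IsCartesianMagic

theorem stmt10_general (p r : ℕ) (hp : 0 < p) (hr : 0 < r) (m : ℕ)
    (e : ((Fin p × Fin p) ⊕ (Fin p × Fin (p * r)) ⊕ (Fin p × Fin (p * r))) ≃
      Fin (p * p + p * (p * r) + p * (p * r)))
    (PQ : Fin p → Fin p → ℕ) (PR : Fin p → Fin (p * r) → ℕ) (QR : Fin p → Fin (p * r) → ℕ)
    (hPQ : ∀ i j, PQ i j = (e (Sum.inl (i, j))).val + 1)
    (hrow : ∀ i, (∑ j, PQ i j) + (∑ k, PR i k) = m)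
    (hcol : ∀ j, (∑ i, PQ i j) + (∑ k, QR j k) = m)
    (hz : ∀ k, (∑ i, PR i k) + (∑ j, QR j k) = m) :
    r = 1 := by
  have hsum := (IsCartesianMagic.mk hrow hcol hz).two_nsmul_sum_add_card_nsmul
  simp only [Fintype.card_fin, smul_eq_mul] at hsum
  haveI : Nonempty (Fin p) := Fin.pos_iff_nonempty.mp hp
  have hPQ_pos : 0 < ∑ i, ∑ j, PQ i j :=
    sum_pos (fun i _ => sum_pos (fun j _ => by simp [hPQ]) univ_nonempty) univ_nonempty
  have hlt : r * (p * m) < 2 * (p * m) := by linarith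
  have hr_lt : r < 2 := Nat.lt_of_mul_lt_mul_right hlt
  omega

/-- If a `(p, p, pr)`-board is Cartesian magic, then `r = 1`. -/
theorem stmt10 (p r : ℕ) (hp : 0 < p) (hr : 0 < r) (m : ℕ)
    (e : ((Fin p × Fin p) ⊕ (Fin p × Fin (p * r)) ⊕ (Fin p × Fin (p * r))) ≃
      Fin (p * p + p * (p * r) + p * (p * r)))
    (PQ : Fin p → Fin p → ℕ) (PR : Fin p → Fin (p * r) → ℕ) (QR : Fin p → Fin (p * r) → ℕ)
    (hPQ : ∀ i j, PQ i j = (e (Sum.inl (i, j))).val + 1)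
    (hPR : ∀ i k, PR i k = (e (Sum.inr (Sum.inl (i, k)))).val + 1)
    (hQR : ∀ j k, QR j k = (e (Sum.inr (Sum.inr (j, k)))).val + 1)
    (hrow : ∀ i, (∑ j, PQ i j) + (∑ k, PR i k) = m)
    (hcol : ∀ j, (∑ i, PQ i j) + (∑ k, QR j k) = m)
    (hz : ∀ k, (∑ i, PR i k) + (∑ j, QR j k) = m) :
    r = 1 :=
  stmt10_general p r hp hr m e PQ PR QR hPQ hrow hcol hz
end

section
/- There is no Cartesian magic (1,q,r)-board for any positive integers q ≤ r (including q = r = 1). -/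
/-!
Write `A`, `B`, `C` for the sums of the labels in `PQ`, `PR` and `QR`. Summing the row and
column conditions gives `A + C = q m` and `B + C = r m`, while `A + B = m`. Then
`B - A = (r - q) m` together with `A + B = m` and `A > 0` forces `r = q` and `A = B = m / 2`.
Adding the three block sums, `(2q + 1) m = N (N + 1)` with `N = q (q + 2)` the number of cells,
and since `16 N (N + 1) + 3 = (2q + 1)(2q + 3)(4q² + 8q + 1)` we get `2q + 1 ∣ 3`, so `q = 1`.
The `(1,1,1)`-board then has `A = B = 2`: the two labels in `PQ` and `PR` coincide.
-/

open Finset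

theorem sum_equiv_fin_val_add_one_mul_two {α : Type*} [Fintype α] {n : ℕ} (e : α ≃ Fin n) :
    (∑ x, ((e x : ℕ) + 1)) * 2 = n * (n + 1) := by
  have hshift : ∑ i ∈ range (n + 1), i = ∑ i ∈ range n, (i + 1) := sum_range_succ' _ n
  rw [e.sum_comp (fun i : Fin n => (i : ℕ) + 1), Fin.sum_univ_eq_sum_range (· + 1), ← hshift,
    sum_range_id_mul_two, Nat.add_sub_cancel, mul_comm]

theorem sum_add_sum_eq_card_mul {ι : Type*} [Fintype ι] {f g : ι → ℕ} {m : ℕ}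
    (h : ∀ i, f i + g i = m) : ∑ i, f i + ∑ i, g i = Fintype.card ι * m := by
  rw [← sum_add_distrib]
  exact sum_const_nat fun i _ => h i

theorem eq_of_add_eq_of_add_eq_mul {A B C m q r : ℕ} (hAB : A + B = m) (hAC : A + C = q * m)
    (hBC : B + C = r * m) (hA : 0 < A) (hqr : q ≤ r) : r = q := by
  by_contra hne
  have : (q + 1) * m ≤ r * m := Nat.mul_le_mul_right m (by omega)
  rw [add_mul, one_mul] at this
  omega

theorem le_one_of_two_mul_add_one_dvd {q : ℕ}
    (h : 2 * q + 1 ∣ q * (q + 2) * (q * (q + 2) + 1)) : q ≤ 1 := by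
  have hfactor : 16 * (q * (q + 2) * (q * (q + 2) + 1)) + 3 =
      (2 * q + 1) * ((2 * q + 3) * (4 * q ^ 2 + 8 * q + 1)) := by ring
  have h3 : 2 * q + 1 ∣ 3 :=
    (Nat.dvd_add_right (h.mul_left 16)).mp (hfactor ▸ dvd_mul_right _ _)
  have := Nat.le_of_dvd (by norm_num) h3
  omega

theorem stmt11_general (q r : ℕ) (hq : 0 < q) (hqr : q ≤ r) :
    ¬ ∃ (m : ℕ) (e : (Fin q ⊕ Fin r ⊕ (Fin q × Fin r)) ≃ Fin (q + r + q * r)),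
      ((∑ j, ((e (Sum.inl j)).val + 1)) + (∑ k, ((e (Sum.inr (Sum.inl k))).val + 1)) = m) ∧
      (∀ j : Fin q,
        ((e (Sum.inl j)).val + 1) + (∑ k, ((e (Sum.inr (Sum.inr (j, k)))).val + 1)) = m) ∧
      (∀ k : Fin r,
        ((e (Sum.inr (Sum.inl k))).val + 1) + (∑ j, ((e (Sum.inr (Sum.inr (j, k)))).val + 1)) = m) := by
  rintro ⟨m, e, hAB, hrows, hcols⟩
  have hAC := sum_add_sum_eq_card_mul hrows
  have hBC := sum_add_sum_eq_card_mul hcols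
  rw [sum_comm] at hBC
  have htotal := sum_equiv_fin_val_add_one_mul_two e
  simp only [Fintype.sum_sum_type, Fintype.sum_prod_type, Fintype.card_fin] at htotal hAC hBC
  have hA : 0 < ∑ j : Fin q, ((e (Sum.inl j) : ℕ) + 1) :=
    sum_pos (fun _ _ => Nat.succ_pos _) (univ_nonempty_iff.mpr ⟨⟨0, hq⟩⟩)
  obtain rfl : q = r := (eq_of_add_eq_of_add_eq_mul hAB hAC hBC hA hqr).symm
  have hdvd : 2 * q + 1 ∣ q * (q + 2) * (q * (q + 2) + 1) :=
    ⟨m, by rw [show q * (q + 2) = q + q + q * q by ring, ← htotal]; linarith⟩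
  obtain rfl : q = 1 := by have := le_one_of_two_mul_add_one_dvd hdvd; omega
  simp only [Fin.sum_univ_one] at hAB hAC hBC htotal
  have hlabel : e (Sum.inl 0) = e (Sum.inr (Sum.inl 0)) := Fin.ext (by omega)
  exact Sum.inl_ne_inr (e.injective hlabel)

/-- There is no Cartesian magic `(1,q,r)`-board for any positive integers `q ≤ r`. -/
theorem stmt11 (q r : ℕ) (hq : 0 < q) (hr : 0 < r) (hqr : q ≤ r) :
    ¬ ∃ (m : ℕ) (e : (Fin q ⊕ Fin r ⊕ (Fin q × Fin r)) ≃ Fin (q + r + q * r)),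
      ((∑ j, ((e (Sum.inl j)).val + 1)) + (∑ k, ((e (Sum.inr (Sum.inl k))).val + 1)) = m) ∧
      (∀ j : Fin q,
        ((e (Sum.inl j)).val + 1) + (∑ k, ((e (Sum.inr (Sum.inr (j, k)))).val + 1)) = m) ∧
      (∀ k : Fin r,
        ((e (Sum.inr (Sum.inl k))).val + 1) + (∑ j, ((e (Sum.inr (Sum.inr (j, k)))).val + 1)) = m) :=
  stmt11_general q r hq hqr
end

section
/- Let p = 2n+1 be odd with p ≥ 3 and let M be a p×p magic square on [1, p²] (all row sums and column sums equal p(p²+1)/2). Suppose A, B, C are p×p matrices with entries in {0,1,2} such that for each (i,j), {Aᵢⱼ, Bᵢⱼ, Cᵢⱼ} = {0,1,2}, and every row sum and column sum of each of A, B, C equals p. Define PQ = 3M − A, PR = 3M − B, QR = 3M − C (entrywise). Then the entries of PQ, PR, QR together form a bijection onto [1, 3p²], and every row sum and column sum of each of PQ, PR, QR equals 3p(p²+1)/2 − p; consequently the (p,p,p)-board with these rectangles is Cartesian magic with constant m = 3p(p²+1) − 2p. -/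
/-!
Write `3M − A`, `3M − B`, `3M − C` as `3m − d` with `m ∈ [1, p²]` and a digit `d ∈ {0, 1, 2}`.
Since `3m − d` determines both `m` and `d` (division with remainder), and the three digits at a
cell are distinct, the `3p²` labels are distinct numbers in `[1, 3p²]`, hence all of it. A line sum
of `3M − A` is `3 · p(p² + 1)/2 − p` because the entries of `A` along a line add up to `p`.
-/

open Function Finset

lemma le_two_of_insert_eq_zero_one_two {a b c : ℕ}
    (h : ({a, b, c} : Finset ℕ) = {0, 1, 2}) : a ≤ 2 ∧ b ≤ 2 ∧ c ≤ 2 := by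
  have hle : ∀ x ∈ ({a, b, c} : Finset ℕ), x ≤ 2 := by rw [h]; decide
  simpa using hle

lemma pairwise_ne_of_insert_eq_zero_one_two {a b c : ℕ}
    (h : ({a, b, c} : Finset ℕ) = {0, 1, 2}) : a ≠ b ∧ a ≠ c ∧ b ≠ c := by
  have hcard : #{a, b, c} = 3 := by rw [h]; rfl
  refine ⟨?_, ?_, ?_⟩ <;> rintro rfl <;>
    simp only [insert_eq_of_mem, mem_insert_self, mem_insert, mem_singleton, or_true] at hcard <;>
    exact (card_le_two.trans_lt (by norm_num)).ne hcard

lemma Function.Injective.three_mul_sub {α ι : Type*} {m : ι → ℕ} {π : α → ι} {d : α → ℕ}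
    (hm : Injective m) (hm₁ : ∀ i, 1 ≤ m i) (hd : ∀ x, d x ≤ 2)
    (hπd : Injective fun x => (π x, d x)) : Injective fun x => 3 * m (π x) - d x := by
  intro x y (h : 3 * m (π x) - d x = 3 * m (π y) - d y)
  have := hm₁ (π x); have := hm₁ (π y); have := hd x; have := hd y
  have hmd : m (π x) = m (π y) ∧ d x = d y := by omega
  exact hπd (Prod.ext (hm hmd.1) hmd.2)

lemma range_eq_Icc_of_injective {α : Type*} [Fintype α] {f : α → ℕ} {N : ℕ}
    (hf : Injective f) (hmem : ∀ x, f x ∈ Icc 1 N) (hcard : Fintype.card α = N) :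
    Set.range f = Set.Icc 1 N := by
  have himage : univ.image f = Icc 1 N :=
    eq_of_subset_of_card_le (fun v hv => by obtain ⟨x, -, rfl⟩ := mem_image.mp hv; exact hmem x)
      (by rw [card_image_of_injective _ hf, card_univ, hcard, Nat.card_Icc, Nat.add_sub_cancel])
  rw [← coe_Icc, ← himage, coe_image, coe_univ, Set.image_univ]

section Board

variable {ι : Type*} {m a b c : ι → ℕ}

/-- The rectangles `PQ`, `PR`, `QR` of the board, as one labelling of `ι ⊕ ι ⊕ ι`. -/
def tripleLabel (m a b c : ι → ℕ) : ι ⊕ ι ⊕ ι → ℕ :=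
  Sum.elim (fun i => 3 * m i - a i) (Sum.elim (fun i => 3 * m i - b i) (fun i => 3 * m i - c i))

lemma tripleLabel_eq (m a b c : ι → ℕ) :
    tripleLabel m a b c = fun x => 3 * m (Sum.elim id (Sum.elim id id) x) -
      Sum.elim a (Sum.elim b c) x := by
  funext x; rcases x with i | i | i <;> rfl

variable (habc : ∀ i, ({a i, b i, c i} : Finset ℕ) = {0, 1, 2})
include habc

lemma injective_cell_digit :
    Injective fun x : ι ⊕ ι ⊕ ι =>
      (Sum.elim id (Sum.elim id id) x, Sum.elim a (Sum.elim b c) x) := by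
  rintro (i | i | i) (j | j | j) h <;> simp only [Prod.mk.injEq, Sum.elim_inl, Sum.elim_inr, id]
    at h <;> obtain ⟨rfl, h⟩ := h <;> have := pairwise_ne_of_insert_eq_zero_one_two (habc i)
    <;> simp_all

lemma tripleLabel_injective (hm : Injective m) (hm₁ : ∀ i, 1 ≤ m i) :
    Injective (tripleLabel m a b c) := by
  rw [tripleLabel_eq]
  refine hm.three_mul_sub hm₁ ?_ (injective_cell_digit habc)
  rintro (i | i | i) <;> simp only [Sum.elim_inl, Sum.elim_inr] <;>
    have := le_two_of_insert_eq_zero_one_two (habc i) <;> omega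

lemma range_tripleLabel [Fintype ι] {N : ℕ} (hm : Injective m) (hmN : ∀ i, m i ∈ Icc 1 N)
    (hcard : Fintype.card ι = N) : Set.range (tripleLabel m a b c) = Set.Icc 1 (3 * N) := by
  have hm₁ i : 1 ≤ m i := (mem_Icc.mp (hmN i)).1
  refine range_eq_Icc_of_injective (tripleLabel_injective habc hm hm₁) ?_
    (by simp only [Fintype.card_sum, hcard]; ring)
  rintro (i | i | i) <;> simp only [tripleLabel, Sum.elim_inl, Sum.elim_inr, mem_Icc] <;>
    have := le_two_of_insert_eq_zero_one_two (habc i) <;> have := mem_Icc.mp (hmN i) <;> omega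

end Board

lemma even_mul_sq_add_one (p : ℕ) : Even (p * (p ^ 2 + 1)) := by
  simpa [Nat.even_mul, Nat.even_add_one, Nat.even_pow] using Nat.even_or_odd p

lemma sum_three_mul_sub_eq {ι : Type*} [Fintype ι] {p : ℕ} {u v : ι → ℕ} (hu : ∀ j, 1 ≤ u j)
    (hv : ∀ j, v j ≤ 2) (hsu : ∑ j, u j = p * (p ^ 2 + 1) / 2) (hsv : ∑ j, v j = p) :
    ∑ j, (3 * u j - v j) = 3 * p * (p ^ 2 + 1) / 2 - p := by
  rw [sum_tsub_distrib _ fun j _ => by linarith [hu j, hv j], ← mul_sum, hsu, hsv, mul_assoc,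
    Nat.mul_div_assoc _ (even_mul_sq_add_one p).two_dvd]

lemma magic_line_add_magic_line (p : ℕ) :
    (3 * p * (p ^ 2 + 1) / 2 - p) + (3 * p * (p ^ 2 + 1) / 2 - p) =
      3 * p * (p ^ 2 + 1) - 2 * p := by
  obtain ⟨k, hk⟩ := even_mul_sq_add_one p
  have hp : p ≤ p * (p ^ 2 + 1) := Nat.le_mul_of_pos_right p (by positivity)
  rw [mul_assoc]
  omega

theorem stmt14_general (p : ℕ)
    (M A B C PQ PR QR : Fin p → Fin p → ℕ)
    (hMinj : Function.Injective (fun x : Fin p × Fin p => M x.1 x.2))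
    (hMmem : ∀ i j, M i j ∈ Finset.Icc 1 (p ^ 2))
    (hMrow : ∀ i, ∑ j, M i j = p * (p ^ 2 + 1) / 2)
    (hMcol : ∀ j, ∑ i, M i j = p * (p ^ 2 + 1) / 2)
    (htriple : ∀ i j, ({A i j, B i j, C i j} : Finset ℕ) = ({0, 1, 2} : Finset ℕ))
    (hArow : ∀ i, ∑ j, A i j = p) (hAcol : ∀ j, ∑ i, A i j = p)
    (hBrow : ∀ i, ∑ j, B i j = p) (hBcol : ∀ j, ∑ i, B i j = p)
    (hCrow : ∀ i, ∑ j, C i j = p) (hCcol : ∀ j, ∑ i, C i j = p)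
    (hPQ : ∀ i j, PQ i j = 3 * M i j - A i j)
    (hPR : ∀ i j, PR i j = 3 * M i j - B i j)
    (hQR : ∀ i j, QR i j = 3 * M i j - C i j)
    (L : ((Fin p × Fin p) ⊕ (Fin p × Fin p) ⊕ (Fin p × Fin p)) → ℕ)
    (hL : L = Sum.elim (fun x => PQ x.1 x.2)
      (Sum.elim (fun x => PR x.1 x.2) (fun x => QR x.1 x.2))) :
    Function.Injective L ∧ Set.range L = Set.Icc 1 (3 * p ^ 2) ∧
    (∀ i, ∑ j, PQ i j = 3 * p * (p ^ 2 + 1) / 2 - p) ∧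
    (∀ j, ∑ i, PQ i j = 3 * p * (p ^ 2 + 1) / 2 - p) ∧
    (∀ i, ∑ j, PR i j = 3 * p * (p ^ 2 + 1) / 2 - p) ∧
    (∀ j, ∑ i, PR i j = 3 * p * (p ^ 2 + 1) / 2 - p) ∧
    (∀ i, ∑ j, QR i j = 3 * p * (p ^ 2 + 1) / 2 - p) ∧
    (∀ j, ∑ i, QR i j = 3 * p * (p ^ 2 + 1) / 2 - p) ∧
    (∀ i, (∑ j, PQ i j) + (∑ k, PR i k) = 3 * p * (p ^ 2 + 1) - 2 * p) ∧
    (∀ j, (∑ i, PQ i j) + (∑ k, QR j k) = 3 * p * (p ^ 2 + 1) - 2 * p) ∧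
    (∀ k, (∑ i, PR i k) + (∑ j, QR j k) = 3 * p * (p ^ 2 + 1) - 2 * p) := by
  subst hL
  obtain rfl : PQ = fun i j => 3 * M i j - A i j := funext₂ hPQ
  obtain rfl : PR = fun i j => 3 * M i j - B i j := funext₂ hPR
  obtain rfl : QR = fun i j => 3 * M i j - C i j := funext₂ hQR
  have hM₁ i j : 1 ≤ M i j := (mem_Icc.mp (hMmem i j)).1
  have hdig i j := le_two_of_insert_eq_zero_one_two (htriple i j)
  have hPQr i := sum_three_mul_sub_eq (hM₁ i) (fun j => (hdig i j).1) (hMrow i) (hArow i)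
  have hPQc j := sum_three_mul_sub_eq (hM₁ · j) (fun i => (hdig i j).1) (hMcol j) (hAcol j)
  have hPRr i := sum_three_mul_sub_eq (hM₁ i) (fun j => (hdig i j).2.1) (hMrow i) (hBrow i)
  have hPRc j := sum_three_mul_sub_eq (hM₁ · j) (fun i => (hdig i j).2.1) (hMcol j) (hBcol j)
  have hQRr i := sum_three_mul_sub_eq (hM₁ i) (fun j => (hdig i j).2.2) (hMrow i) (hCrow i)
  have hQRc j := sum_three_mul_sub_eq (hM₁ · j) (fun i => (hdig i j).2.2) (hMcol j) (hCcol j)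
  have habc (x : Fin p × Fin p) := htriple x.1 x.2
  refine ⟨tripleLabel_injective habc hMinj fun x => hM₁ x.1 x.2,
    range_tripleLabel habc hMinj (fun x => hMmem x.1 x.2) (by simp [sq]),
    hPQr, hPQc, hPRr, hPRc, hQRr, hQRc, ?_, ?_, ?_⟩ <;> intro i
  · rw [hPQr, hPRr, magic_line_add_magic_line]
  · rw [hPQc, hQRr, magic_line_add_magic_line]
  · rw [hPRc, hQRc, magic_line_add_magic_line]

/-- Theorem 4.6 construction: from a `p × p` magic square `M` and matrices `A, B, C`
with `{Aᵢⱼ, Bᵢⱼ, Cᵢⱼ} = {0,1,2}` entrywise and all line sums `p`, the rectangles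
`PQ = 3M − A`, `PR = 3M − B`, `QR = 3M − C` give a Cartesian magic `(p,p,p)`-board
with constant `3p(p²+1) − 2p`. -/
theorem stmt14 (n : ℕ) (hn : 1 ≤ n) (p : ℕ) (hp : p = 2 * n + 1)
    (M A B C PQ PR QR : Fin p → Fin p → ℕ)
    (hMinj : Function.Injective (fun x : Fin p × Fin p => M x.1 x.2))
    (hMmem : ∀ i j, M i j ∈ Finset.Icc 1 (p ^ 2))
    (hMrow : ∀ i, ∑ j, M i j = p * (p ^ 2 + 1) / 2)
    (hMcol : ∀ j, ∑ i, M i j = p * (p ^ 2 + 1) / 2)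
    (htriple : ∀ i j, ({A i j, B i j, C i j} : Finset ℕ) = ({0, 1, 2} : Finset ℕ))
    (hArow : ∀ i, ∑ j, A i j = p) (hAcol : ∀ j, ∑ i, A i j = p)
    (hBrow : ∀ i, ∑ j, B i j = p) (hBcol : ∀ j, ∑ i, B i j = p)
    (hCrow : ∀ i, ∑ j, C i j = p) (hCcol : ∀ j, ∑ i, C i j = p)
    (hPQ : ∀ i j, PQ i j = 3 * M i j - A i j)
    (hPR : ∀ i j, PR i j = 3 * M i j - B i j)
    (hQR : ∀ i j, QR i j = 3 * M i j - C i j)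
    (L : ((Fin p × Fin p) ⊕ (Fin p × Fin p) ⊕ (Fin p × Fin p)) → ℕ)
    (hL : L = Sum.elim (fun x => PQ x.1 x.2)
      (Sum.elim (fun x => PR x.1 x.2) (fun x => QR x.1 x.2))) :
    Function.Injective L ∧ Set.range L = Set.Icc 1 (3 * p ^ 2) ∧
    (∀ i, ∑ j, PQ i j = 3 * p * (p ^ 2 + 1) / 2 - p) ∧
    (∀ j, ∑ i, PQ i j = 3 * p * (p ^ 2 + 1) / 2 - p) ∧
    (∀ i, ∑ j, PR i j = 3 * p * (p ^ 2 + 1) / 2 - p) ∧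
    (∀ j, ∑ i, PR i j = 3 * p * (p ^ 2 + 1) / 2 - p) ∧
    (∀ i, ∑ j, QR i j = 3 * p * (p ^ 2 + 1) / 2 - p) ∧
    (∀ j, ∑ i, QR i j = 3 * p * (p ^ 2 + 1) / 2 - p) ∧
    (∀ i, (∑ j, PQ i j) + (∑ k, PR i k) = 3 * p * (p ^ 2 + 1) - 2 * p) ∧
    (∀ j, (∑ i, PQ i j) + (∑ k, QR j k) = 3 * p * (p ^ 2 + 1) - 2 * p) ∧
    (∀ k, (∑ i, PR i k) + (∑ j, QR j k) = 3 * p * (p ^ 2 + 1) - 2 * p) :=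
  stmt14_general p M A B C PQ PR QR hMinj hMmem hMrow hMcol htriple hArow hAcol hBrow hBcol hCrow
    hCcol hPQ hPR hQR L hL
end

section
/- For odd p = 2n+1 ≥ 3, there exist p×p matrices A, B, C with entries in {0,1,2}, each having all row sums and column sums equal to p, such that {Aᵢⱼ, Bᵢⱼ, Cᵢⱼ} = {0,1,2} for every cell (i,j). Specifically: A has first row (2,…,2,1,0,…,0) (n twos, one 1, n zeros) and each subsequent row is the cyclic right shift of the previous; B is obtained from A by cyclically shifting columns by n+1 (Bᵢⱼ = Aᵢ,ⱼ₊ₙ₊₁ indices mod p); C has first row (1,…,1,0,1,…,1,2) with 0 in position n+1 and 2 in position 2n+1, each subsequent row the cyclic right shift of the previous. -/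
/-!
All three matrices are circulant, so every row and column sum equals the sum of the first row.
The first row of `A` sums to `2n + 1` and that of `B` is a cyclic shift of it. At each position
the three first rows take the values `0, 1, 2` in some order, so they add up to `3` there, and the
first row of `C` sums to `3p - 2p = p`.
-/

open Finset

section Circulant

variable {G M : Type*} [AddCommGroup G] [Fintype G] [AddCommMonoid M]

/-- The transpose of `Matrix.circulant f`: row `0` is `f` itself. -/
def rightShiftCirculant (f : G → M) (i j : G) : M := f (j - i)

theorem sum_row_rightShiftCirculant (f : G → M) (i : G) :
    ∑ j, rightShiftCirculant f i j = ∑ k, f k :=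
  Fintype.sum_equiv (Equiv.subRight i) _ _ fun _ => rfl

theorem sum_col_rightShiftCirculant (f : G → M) (j : G) :
    ∑ i, rightShiftCirculant f i j = ∑ k, f k :=
  Fintype.sum_equiv (Equiv.subLeft j) _ _ fun _ => rfl

end Circulant

theorem add_add_eq_three_of_finset_eq {a b c : ℕ} (h : ({a, b, c} : Finset ℕ) = {0, 1, 2}) :
    a + b + c = 3 := by
  have hmem : ∀ x, x = a ∨ x = b ∨ x = c ↔ x = 0 ∨ x = 1 ∨ x = 2 := by
    intro x
    simpa using congrArg (x ∈ ·) h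
  have := hmem 0; have := hmem 1; have := hmem 2; have := hmem a; have := hmem b; have := hmem c
  omega

section FirstRows

variable {n : ℕ}

def firstRowA (n : ℕ) (k : Fin (2 * n + 1)) : ℕ :=
  if k.val < n then 2 else if k.val = n then 1 else 0

def firstRowB (n : ℕ) (k : Fin (2 * n + 1)) : ℕ :=
  firstRowA n (k + Fin.ofNat _ (n + 1))

def firstRowC (n : ℕ) (k : Fin (2 * n + 1)) : ℕ :=
  if k.val = n then 0 else if k.val = 2 * n then 2 else 1

theorem val_add_ofNat_succ (hn : 1 ≤ n) (k : Fin (2 * n + 1)) :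
    (k + Fin.ofNat _ (n + 1)).val = if k.val < n then k.val + n + 1 else k.val - n := by
  rw [Fin.val_add, Fin.val_ofNat, Nat.mod_eq_of_lt (show n + 1 < 2 * n + 1 by omega)]
  split_ifs
  · exact Nat.mod_eq_of_lt (by omega)
  · rw [Nat.mod_eq_sub_mod (by omega), Nat.mod_eq_of_lt (by omega)]
    omega

theorem firstRows_eq_zero_one_two (hn : 1 ≤ n) (k : Fin (2 * n + 1)) :
    ({firstRowA n k, firstRowB n k, firstRowC n k} : Finset ℕ) = {0, 1, 2} := by
  simp only [firstRowB, firstRowA, firstRowC, val_add_ofNat_succ hn]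
  split_ifs <;> first | decide | omega

theorem sum_firstRowA : ∑ k, firstRowA n k = 2 * n + 1 := by
  have hsplit : ∀ k : ℕ, (if k < n then 2 else if k = n then 1 else 0) =
      (if k < n then 1 else 0) + (if k < n + 1 then 1 else 0) := by
    intro k
    split_ifs <;> omega
  unfold firstRowA
  rw [Fin.sum_univ_eq_sum_range (fun k => if k < n then 2 else if k = n then 1 else 0)]
  simp only [hsplit, sum_add_distrib, sum_boole, range_eq_Ico, Ico_filter_lt, Nat.card_Ico,
    Nat.cast_id]
  omega

theorem sum_firstRowB : ∑ k, firstRowB n k = 2 * n + 1 :=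
  (Fintype.sum_equiv (Equiv.addRight (Fin.ofNat _ (n + 1))) _ _ fun _ => rfl).trans sum_firstRowA

theorem sum_firstRowC (hn : 1 ≤ n) : ∑ k, firstRowC n k = 2 * n + 1 := by
  have h : ∑ k, (firstRowA n k + firstRowB n k + firstRowC n k) = 3 * (2 * n + 1) := by
    simp [add_add_eq_three_of_finset_eq (firstRows_eq_zero_one_two hn _), mul_comm]
  rw [sum_add_distrib, sum_add_distrib, sum_firstRowA, sum_firstRowB] at h
  omega

end FirstRows

/-- For odd `p = 2n+1 ≥ 3` there exist `p × p` matrices `A, B, C` with entries in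
`{0,1,2}`, all row and column sums equal to `p`, and `{Aᵢⱼ, Bᵢⱼ, Cᵢⱼ} = {0,1,2}`
at every cell. -/
theorem stmt15 (n : ℕ) (hn : 1 ≤ n) :
    ∃ A B C : Fin (2 * n + 1) → Fin (2 * n + 1) → ℕ,
      (∀ i j, ({A i j, B i j, C i j} : Finset ℕ) = ({0, 1, 2} : Finset ℕ)) ∧
      (∀ i, ∑ j, A i j = 2 * n + 1) ∧ (∀ j, ∑ i, A i j = 2 * n + 1) ∧
      (∀ i, ∑ j, B i j = 2 * n + 1) ∧ (∀ j, ∑ i, B i j = 2 * n + 1) ∧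
      (∀ i, ∑ j, C i j = 2 * n + 1) ∧ (∀ j, ∑ i, C i j = 2 * n + 1) := by
  refine ⟨rightShiftCirculant (firstRowA n), rightShiftCirculant (firstRowB n),
    rightShiftCirculant (firstRowC n), fun i j => firstRows_eq_zero_one_two hn (j - i), ?_⟩
  simp [sum_row_rightShiftCirculant, sum_col_rightShiftCirculant, sum_firstRowA, sum_firstRowB,
    sum_firstRowC hn]
end

section
/- For positive integers s, k with k > s ≥ 1, the three constants c₂ = k(4sk+4s+2k+3) + s + 1, c₃ = (s+1)(4sk+4s+4k+3), and c₁ = k(8sk+4s+6k+3) + (s+1)(2s+1) satisfy c₁ > c₂ and c₁ > c₃; and with the constants c₂' = k(4sk+4s+2k+5)+s+1, c₃' = (s+1)(4sk+4k+1) computed from the alternative labeling, at least one of the pairs (c₂,c₃) and (c₂',c₃') consists of distinct values, so the (1, 2s+1, 2k)-board admits a Cartesian tri-magic design. -/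
namespace Stmt17full

def ZZ (s : ℕ) : ℕ := 2 * (((s+1)/2)/2) + 1

def smP (s m j : ℕ) : Prop :=
  (m = 0 ∧ (
      (j + 1 = s)
    ∨ (s + 2 ≤ j ∧ (j - s) % 2 = 0)
    ∨ (j = s ∧ (s % 4 = 1 ∨ s % 4 = 2))
    ∨ (s + 3 ≤ j ∧ (j - s) % 2 = 1 ∧ j ≤ s + ZZ s)
    ∨ (j + 3 ≤ s ∧ (s - j) % 2 = 1 ∧ s ≤ j + ZZ s)))
  ∨ (1 ≤ m ∧ (
      (2*m ≤ s ∧ (j + 2*m = s ∨ j + 2*m + 1 = s))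
    ∨ (2*m = s ∧ ¬(j = s + 2*m) ∧ j % 2 = 1)
    ∨ (2*m < s ∧ ¬(j = s + 2*m ∨ j = s + 2*m + 1) ∧ j % 2 = 0)
    ∨ (s < 2*m ∧ j % 2 = 0)))

instance (s m j : ℕ) : Decidable (smP s m j) := by unfold smP; infer_instance

lemma smP0 (s j : ℕ) : smP s 0 j ↔
    ((j + 1 = s)
    ∨ (s + 2 ≤ j ∧ (j - s) % 2 = 0)
    ∨ (j = s ∧ (s % 4 = 1 ∨ s % 4 = 2))
    ∨ (s + 3 ≤ j ∧ (j - s) % 2 = 1 ∧ j ≤ s + (2 * (((s+1)/2)/2) + 1))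
    ∨ (j + 3 ≤ s ∧ (s - j) % 2 = 1 ∧ s ≤ j + (2 * (((s+1)/2)/2) + 1))) := by
  unfold smP ZZ; omega

lemma smPpos (s m j : ℕ) (hm : 1 ≤ m) : smP s m j ↔
    ((2*m ≤ s ∧ (j + 2*m = s ∨ j + 2*m + 1 = s))
    ∨ (2*m = s ∧ ¬(j = s + 2*m) ∧ j % 2 = 1)
    ∨ (2*m < s ∧ ¬(j = s + 2*m ∨ j = s + 2*m + 1) ∧ j % 2 = 0)
    ∨ (s < 2*m ∧ j % 2 = 0)) := by
  unfold smP; omega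

lemma sum_ite_eqv (n a : ℕ) (v : ℤ) :
    ∑ j ∈ Finset.range n, (if j = a then v else 0) = if a < n then v else 0 := by
  induction n with
  | zero => simp
  | succ n ih =>
    rw [Finset.sum_range_succ, ih]
    split_ifs <;> first | (exfalso; omega) | ring

lemma sum_ite_shift (n c a : ℕ) (v : ℤ) :
    ∑ j ∈ Finset.range n, (if j + c = a then v else 0) = if c ≤ a ∧ a < n + c then v else 0 := by
  induction n with
  | zero =>
    simp only [Finset.range_zero, Finset.sum_empty]
    split_ifs with h
    · exfalso; omega
    · rfl
  | succ n ih =>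
    rw [Finset.sum_range_succ, ih]
    split_ifs <;> first | (exfalso; omega) | ring

lemma sum_parity_even (n : ℕ) :
    ∑ j ∈ Finset.range n, (if j % 2 = 0 then (1:ℤ) else 0) = ((n+1)/2 : ℕ) := by
  induction n with
  | zero => simp
  | succ n ih =>
    rw [Finset.sum_range_succ, ih]
    split_ifs with h
    · have h2 : ((n+1+1)/2 : ℕ) = (n+1)/2 + 1 := by omega
      rw [h2]; push_cast; ring
    · have h2 : ((n+1+1)/2 : ℕ) = (n+1)/2 := by omega
      rw [h2]; ring

lemma sum_parity_odd (n : ℕ) :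
    ∑ j ∈ Finset.range n, (if j % 2 = 1 then (1:ℤ) else 0) = (n/2 : ℕ) := by
  induction n with
  | zero => simp
  | succ n ih =>
    rw [Finset.sum_range_succ, ih]
    split_ifs with h
    · have h2 : ((n+1)/2 : ℕ) = n/2 + 1 := by omega
      rw [h2]; push_cast; ring
    · have h2 : ((n+1)/2 : ℕ) = n/2 := by omega
      rw [h2]; ring

set_option maxHeartbeats 2000000 in
lemma count_sm_pos (s m : ℕ) (hm : 1 ≤ m) :
    ∑ j ∈ Finset.range (2*s+1), (if smP s m j then (1:ℤ) else 0) = s + 1 := by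
  by_cases hms : 2*m = s
  · have hpt : ∀ j ∈ Finset.range (2*s+1), (if smP s m j then (1:ℤ) else 0)
        = (if j % 2 = 1 then (1:ℤ) else 0)
          + ((if j + (2*m) = s then (1:ℤ) else 0)
          + ((if j + (2*m+1) = s then (0:ℤ) else 0)
          + ((if j = s + 2*m then (0:ℤ) else 0)
          + (if j = s + 2*m + 1 then (0:ℤ) else 0)))) := by
      intro j hj
      rw [Finset.mem_range] at hj
      by_cases h : smP s m j <;> [rw [if_pos h]; rw [if_neg h]] <;>
        rw [smPpos s m j hm] at h <;>
        split_ifs <;> omega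
    rw [Finset.sum_congr rfl hpt]
    rw [Finset.sum_add_distrib, Finset.sum_add_distrib, Finset.sum_add_distrib,
        Finset.sum_add_distrib]
    rw [sum_ite_shift, sum_ite_shift, sum_ite_eqv, sum_ite_eqv, sum_parity_odd]
    split_ifs <;> omega
  · have hpt : ∀ j ∈ Finset.range (2*s+1), (if smP s m j then (1:ℤ) else 0)
        = (if j % 2 = 0 then (1:ℤ) else 0)
          + ((if j + (2*m) = s then (if s % 2 = 1 then (1:ℤ) else 0) else 0)
          + ((if j + (2*m+1) = s then (if s % 2 = 0 then (1:ℤ) else 0) else 0)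
          + ((if j = s + 2*m then (if s % 2 = 0 then (-1:ℤ) else 0) else 0)
          + (if j = s + 2*m + 1 then (if s % 2 = 1 then (-1:ℤ) else 0) else 0)))) := by
      intro j hj
      rw [Finset.mem_range] at hj
      by_cases h : smP s m j <;> [rw [if_pos h]; rw [if_neg h]] <;>
        rw [smPpos s m j hm] at h <;>
        split_ifs <;> omega
    rw [Finset.sum_congr rfl hpt]
    rw [Finset.sum_add_distrib, Finset.sum_add_distrib, Finset.sum_add_distrib,
        Finset.sum_add_distrib]
    rw [sum_ite_shift, sum_ite_shift, sum_ite_eqv, sum_ite_eqv, sum_parity_even]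
    split_ifs <;> omega

set_option maxHeartbeats 4000000 in
lemma count_sm_zero (s : ℕ) (hs : 1 ≤ s) :
    ∑ j ∈ Finset.range (2*s+1), (if smP s 0 j then (1:ℤ) else 0) = s + 1 := by
  set f : ℕ → ℤ := fun j => if smP s 0 j then 1 else 0 with hf
  have h1 : ∑ j ∈ Finset.range (2*s+1), f j
      = (∑ i ∈ Finset.range s, f i) + ((∑ i ∈ Finset.range s, f (s+(i+1))) + f (s+0)) := by
    rw [show 2*s+1 = s + (s+1) by ring, Finset.sum_range_add]
    congr 1
    exact Finset.sum_range_succ' (fun i => f (s+i)) s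
  have h2 : ∑ i ∈ Finset.range s, f i = ∑ i ∈ Finset.range s, f (s-1-i) :=
    (Finset.sum_range_reflect f s).symm
  have hG : ∀ i ∈ Finset.range s, f (s-1-i) + f (s+(i+1))
      = (if i = 0 then (1:ℤ) else if i % 2 = 1 then 1 else if i + 1 ≤ ZZ s then 2 else 0) := by
    intro i hi
    rw [Finset.mem_range] at hi
    have hz : ZZ s = 2 * (((s+1)/2)/2) + 1 := rfl
    simp only [hf]
    by_cases ha : smP s 0 (s-1-i) <;> by_cases hb : smP s 0 (s+(i+1)) <;>
      [rw [if_pos ha, if_pos hb]; rw [if_pos ha, if_neg hb]; rw [if_neg ha, if_pos hb];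
       rw [if_neg ha, if_neg hb]] <;>
      rw [smP0] at ha hb <;>
      split_ifs <;> omega
  have hAC : (∑ i ∈ Finset.range s, f (s-1-i)) + (∑ i ∈ Finset.range s, f (s+(i+1)))
      = ∑ i ∈ Finset.range s,
        (if i = 0 then (1:ℤ) else if i % 2 = 1 then 1 else if i + 1 ≤ ZZ s then 2 else 0) := by
    rw [← Finset.sum_add_distrib]
    exact Finset.sum_congr rfl hG
  have hclosed : ∀ n : ℕ, ∑ i ∈ Finset.range n,
        (if i = 0 then (1:ℤ) else if i % 2 = 1 then 1 else if i + 1 ≤ ZZ s then 2 else 0)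
      = ((if n = 0 then 0 else 1 + n/2 + 2*((min (n-1) (ZZ s - 1))/2) : ℕ) : ℤ) := by
    intro n
    induction n with
    | zero => simp
    | succ n ih =>
      rw [Finset.sum_range_succ, ih]
      have hzodd : ZZ s % 2 = 1 := by unfold ZZ; omega
      split_ifs <;> (try contradiction) <;> omega
  have hfs : f (s+0) = if s % 4 = 1 ∨ s % 4 = 2 then (1:ℤ) else 0 := by
    simp only [hf]
    have hz : ZZ s = 2 * (((s+1)/2)/2) + 1 := rfl
    by_cases h : smP s 0 (s+0) <;> [rw [if_pos h]; rw [if_neg h]] <;>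
      rw [smP0] at h <;> split_ifs <;> omega
  have hzle : ZZ s ≤ s ∧ ZZ s % 2 = 1 := by unfold ZZ; omega
  rw [h1, h2, hfs]
  have := hclosed s
  have hfin : (∑ i ∈ Finset.range s, f (s-1-i)) + (∑ i ∈ Finset.range s, f (s+(i+1)))
      = ((if s = 0 then 0 else 1 + s/2 + 2*((min (s-1) (ZZ s - 1))/2) : ℕ) : ℤ) := by
    rw [hAC]; exact this
  have hmin : min (s-1) (ZZ s - 1) = ZZ s - 1 := by omega
  rw [hmin] at hfin
  have hs0 : ¬(s = 0) := by omega
  rw [if_neg hs0] at hfin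
  have hzz : ZZ s = 2 * (((s+1)/2)/2) + 1 := rfl
  split_ifs <;> omega


-- new defs
def bet (s k j t : ℕ) : ℕ :=
  if t % 2 = 0 then (if smP s (k - 1 - t/2) j then t/2 else 2*k - 1 - t/2)
  else (if smP s (k - 1 - t/2) (2*s - j) then 2*k - 1 - t/2 else t/2)

def alf (s j t : ℕ) : ℕ := if t % 2 = 0 then j else 2*s - j

def cell (s k j t : ℕ) : ℕ := 2*k*(alf s j t) + bet s k j t

lemma bet_even (s k j u : ℕ) :
    bet s k j (2*u) = if smP s (k-1-u) j then u else 2*k-1-u := by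
  unfold bet
  rw [if_pos (by omega : (2*u) % 2 = 0), (by omega : (2*u)/2 = u)]

lemma bet_odd (s k j u : ℕ) :
    bet s k j (2*u+1) = if smP s (k-1-u) (2*s-j) then 2*k-1-u else u := by
  unfold bet
  rw [if_neg (by omega : ¬((2*u+1) % 2 = 0)), (by omega : (2*u+1)/2 = u)]

def PB (s k j m : ℕ) : ℤ :=
  (if smP s m j then ((k:ℤ)-1-m) else ((k:ℤ)+m))
  + (if smP s m (2*s-j) then ((k:ℤ)+m) else ((k:ℤ)-1-m))

def DD (s k j m : ℕ) : ℤ := PB s k j m - (2*(k:ℤ)-1)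

lemma ptDD0 (s k m : ℕ) : DD s k s m = 0 := by
  unfold DD PB
  have h : 2*s - s = s := by omega
  rw [h]
  by_cases h1 : smP s m s <;> simp [h1] <;> ring

set_option maxHeartbeats 4000000 in
lemma ptDDodd (s k j m w : ℕ) (hs : 1 ≤ s) (hj : j = s + (2*w+1)) (hle : j ≤ 2*s) :
    DD s k j m = if m = w then (2*(w:ℤ)+1) else 0 := by
  unfold DD PB
  rcases Nat.eq_zero_or_pos m with hm | hm
  · subst hm
    by_cases h1 : smP s 0 j <;> by_cases h2 : smP s 0 (2*s-j) <;>
      simp only [h1, h2, if_true, if_false] <;>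
      rw [smP0] at h1 h2 <;>
      split_ifs <;> push_cast <;> omega
  · by_cases h1 : smP s m j <;> by_cases h2 : smP s m (2*s-j) <;>
      simp only [h1, h2, if_true, if_false] <;>
      rw [smPpos s m j hm] at h1 <;>
      rw [smPpos s m (2*s-j) hm] at h2 <;>
      split_ifs <;> push_cast <;> omega

set_option maxHeartbeats 4000000 in
lemma ptDDeven (s k j m w : ℕ) (hs : 1 ≤ s) (hw : 1 ≤ w) (hj : j = s + 2*w) (hle : j ≤ 2*s) :
    DD s k j m = (if m = w then (2*(w:ℤ)+1) else 0) + (if m = 0 then -1 else 0) := by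
  unfold DD PB
  rcases Nat.eq_zero_or_pos m with hm | hm
  · subst hm
    by_cases h1 : smP s 0 j <;> by_cases h2 : smP s 0 (2*s-j) <;>
      simp only [h1, h2, if_true, if_false] <;>
      rw [smP0] at h1 h2 <;>
      split_ifs <;> push_cast <;> omega
  · by_cases h1 : smP s m j <;> by_cases h2 : smP s m (2*s-j) <;>
      simp only [h1, h2, if_true, if_false] <;>
      rw [smPpos s m j hm] at h1 <;>
      rw [smPpos s m (2*s-j) hm] at h2 <;>
      split_ifs <;> push_cast <;> omega

lemma ptDDneg (s k j m : ℕ) (hle : j ≤ 2*s) :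
    DD s k j m = - DD s k (2*s-j) m := by
  unfold DD PB
  have h : 2*s - (2*s-j) = j := by omega
  rw [h]
  by_cases h1 : smP s m j <;> by_cases h2 : smP s m (2*s-j) <;>
    simp only [h1, h2, if_true, if_false] <;> ring

lemma sumDD (s k j : ℕ) (hs : 1 ≤ s) (hk : s < k) (hle : j ≤ 2*s) :
    ∑ m ∈ Finset.range k, DD s k j m = (j:ℤ) - s := by
  rcases Nat.lt_trichotomy j s with hj | hj | hj
  · -- j < s : use antisymmetry with 2s - j > s
    have h2 : ∀ m ∈ Finset.range k, DD s k j m = - DD s k (2*s-j) m :=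
      fun m _ => ptDDneg s k j m hle
    rw [Finset.sum_congr rfl h2, Finset.sum_neg_distrib]
    have hge : s < 2*s - j := by omega
    have hle2 : 2*s - j ≤ 2*s := by omega
    have hd : 2*s - j = s + ((2*s-j) - s) := by omega
    rcases Nat.even_or_odd ((2*s-j) - s) with ⟨w, hw⟩ | ⟨w, hw⟩
    · have hw1 : 1 ≤ w := by omega
      have hjj : 2*s - j = s + 2*w := by omega
      have h3 : ∀ m ∈ Finset.range k, DD s k (2*s-j) m
          = (if m = w then (2*(w:ℤ)+1) else 0) + (if m = 0 then -1 else 0) :=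
        fun m _ => ptDDeven s k (2*s-j) m w hs hw1 hjj hle2
      rw [Finset.sum_congr rfl h3, Finset.sum_add_distrib, sum_ite_eqv, sum_ite_eqv]
      have hwk : w < k := by omega
      have h0k : 0 < k := by omega
      rw [if_pos hwk, if_pos h0k]
      push_cast
      omega
    · have hjj : 2*s - j = s + (2*w+1) := by omega
      have h3 : ∀ m ∈ Finset.range k, DD s k (2*s-j) m
          = (if m = w then (2*(w:ℤ)+1) else 0) :=
        fun m _ => ptDDodd s k (2*s-j) m w hs hjj hle2
      rw [Finset.sum_congr rfl h3, sum_ite_eqv]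
      have hwk : w < k := by omega
      rw [if_pos hwk]
      push_cast
      omega
  · have h2 : ∀ m ∈ Finset.range k, DD s k j m = 0 := by
      intro m _; rw [hj]; exact ptDD0 s k m
    rw [Finset.sum_congr rfl h2, hj]
    simp
  · rcases Nat.even_or_odd (j - s) with ⟨w, hw⟩ | ⟨w, hw⟩
    · have hw1 : 1 ≤ w := by omega
      have hjj : j = s + 2*w := by omega
      have h3 : ∀ m ∈ Finset.range k, DD s k j m
          = (if m = w then (2*(w:ℤ)+1) else 0) + (if m = 0 then -1 else 0) :=
        fun m _ => ptDDeven s k j m w hs hw1 hjj hle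
      rw [Finset.sum_congr rfl h3, Finset.sum_add_distrib, sum_ite_eqv, sum_ite_eqv]
      rw [if_pos (by omega : w < k), if_pos (by omega : 0 < k)]
      push_cast
      omega
    · have hjj : j = s + (2*w+1) := by omega
      have h3 : ∀ m ∈ Finset.range k, DD s k j m
          = (if m = w then (2*(w:ℤ)+1) else 0) :=
        fun m _ => ptDDodd s k j m w hs hjj hle
      rw [Finset.sum_congr rfl h3, sum_ite_eqv]
      rw [if_pos (by omega : w < k)]
      push_cast
      omega



lemma sum_pairup (f : ℕ → ℤ) (n : ℕ) :
    ∑ t ∈ Finset.range (2*n), f t = ∑ u ∈ Finset.range n, (f (2*u) + f (2*u+1)) := by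
  induction n with
  | zero => simp
  | succ n ih =>
    have h : 2*(n+1) = (2*n+1)+1 := by ring
    rw [h, Finset.sum_range_succ, Finset.sum_range_succ, Finset.sum_range_succ, ih]
    ring

lemma sum_id_odd (s : ℕ) : ∑ j ∈ Finset.range (2*s+1), (j:ℤ) = s*(2*s+1) := by
  induction s with
  | zero => simp
  | succ s ih =>
    have h : 2*(s+1)+1 = ((2*s+1)+1)+1 := by ring
    rw [h, Finset.sum_range_succ, Finset.sum_range_succ, ih]
    push_cast; ring

lemma count_sm (s m : ℕ) (hs : 1 ≤ s) :
    ∑ j ∈ Finset.range (2*s+1), (if smP s m j then (1:ℤ) else 0) = s + 1 := by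
  rcases Nat.eq_zero_or_pos m with hm | hm
  · subst hm; exact count_sm_zero s hs
  · exact count_sm_pos s m hm

lemma count_sm_ref (s m : ℕ) (hs : 1 ≤ s) :
    ∑ j ∈ Finset.range (2*s+1), (if smP s m (2*s-j) then (1:ℤ) else 0) = s + 1 := by
  have h := Finset.sum_range_reflect (fun j => if smP s m j then (1:ℤ) else 0) (2*s+1)
  have he : ∀ j ∈ Finset.range (2*s+1),
      (if smP s m (2*s+1-1-j) then (1:ℤ) else 0) = (if smP s m (2*s-j) then (1:ℤ) else 0) := by
    intro j hj
    have : 2*s+1-1-j = 2*s-j := by omega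
    rw [this]
  rw [Finset.sum_congr rfl he] at h
  rw [h]
  exact count_sm s m hs

lemma row_cells (s k j : ℕ) (hs : 1 ≤ s) (hk : s < k) (hle : j ≤ 2*s) :
    ∑ t ∈ Finset.range (2*k), ((cell s k j t : ℤ) + 1)
      = 4*(k:ℤ)*k*s + 2*(k:ℤ)*k + k + (j:ℤ) - s := by
  rw [sum_pairup (fun t => ((cell s k j t : ℤ) + 1)) k]
  have hc3 : ((2*s-j:ℕ):ℤ) = 2*(s:ℤ) - j := by omega
  have hpair : ∀ u ∈ Finset.range k,
      (((cell s k j (2*u) : ℤ)+1) + (((cell s k j (2*u+1) : ℤ))+1))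
      = (4*(k:ℤ)*s + 2) + PB s k j (k-1-u) := by
    intro u hu
    rw [Finset.mem_range] at hu
    have hc1 : ((2*k-1-u:ℕ):ℤ) = 2*(k:ℤ)-1-u := by omega
    have hc2 : ((k-1-u:ℕ):ℤ) = (k:ℤ)-1-u := by omega
    unfold cell alf PB
    rw [bet_even, bet_odd]
    rw [if_pos (by omega : (2*u)%2 = 0), if_neg (by omega : ¬((2*u+1)%2 = 0))]
    by_cases h1 : smP s (k-1-u) j <;> by_cases h2 : smP s (k-1-u) (2*s-j) <;>
      simp only [h1, h2, if_true, if_false] <;>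
      push_cast <;>
      (try simp only [hc1, hc2, hc3]) <;>
      ring
  rw [Finset.sum_congr rfl hpair, Finset.sum_add_distrib]
  have hPB : ∀ m ∈ Finset.range k, PB s k j m = (2*(k:ℤ)-1) + DD s k j m := by
    intro m _
    unfold DD; ring
  rw [Finset.sum_range_reflect (fun m => PB s k j m) k]
  rw [Finset.sum_congr rfl hPB, Finset.sum_add_distrib, Finset.sum_add_distrib, sumDD s k j hs hk hle]
  rw [Finset.sum_const, Finset.sum_const, Finset.sum_const, Finset.card_range]
  push_cast
  ring

lemma ite_lin (P : Prop) [Decidable P] (a b : ℤ) :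
    (if P then a else b) = b + (a - b) * (if P then (1:ℤ) else 0) := by
  by_cases h : P <;> simp [h]

lemma col_even (s k u : ℕ) (hs : 1 ≤ s) (hk : s < k) (hu : u < k) :
    ∑ j ∈ Finset.range (2*s+1), ((cell s k j (2*u) : ℤ) + 1)
      = 4*(k:ℤ)*s*s + 2*(k:ℤ)*s + (u:ℤ) + 2*(k:ℤ)*s - s + 2*s + 1 := by
  have hc1 : ((2*k-1-u:ℕ):ℤ) = 2*(k:ℤ)-1-u := by omega
  have hpt : ∀ j ∈ Finset.range (2*s+1), ((cell s k j (2*u) : ℤ) + 1)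
      = 2*(k:ℤ)*j + 1 + ((2*(k:ℤ)-1-u) + ((u:ℤ) - (2*(k:ℤ)-1-u)) * (if smP s (k-1-u) j then (1:ℤ) else 0)) := by
    intro j hj
    unfold cell alf
    rw [if_pos (by omega : (2*u)%2 = 0), bet_even]
    rw [← ite_lin]
    by_cases h1 : smP s (k-1-u) j <;>
      simp only [h1, if_true, if_false] <;> push_cast <;> (try simp only [hc1]) <;> ring
  have h2 : ∑ j ∈ Finset.range (2*s+1),
      (((u:ℤ) - (2*(k:ℤ)-1-u)) * (if smP s (k-1-u) j then (1:ℤ) else 0))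
      = ((u:ℤ) - (2*(k:ℤ)-1-u)) * ((s:ℤ)+1) := by
    rw [← Finset.mul_sum, count_sm s (k-1-u) hs]
  have h3 : ∑ j ∈ Finset.range (2*s+1), (2*(k:ℤ)*j) = 2*(k:ℤ)*((s:ℤ)*(2*s+1)) := by
    rw [← Finset.mul_sum, sum_id_odd]
  rw [Finset.sum_congr rfl hpt, Finset.sum_add_distrib, Finset.sum_add_distrib,
      Finset.sum_add_distrib, h2, h3, Finset.sum_const, Finset.sum_const, Finset.card_range]
  push_cast
  ring

lemma col_odd (s k u : ℕ) (hs : 1 ≤ s) (hk : s < k) (hu : u < k) :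
    ∑ j ∈ Finset.range (2*s+1), ((cell s k j (2*u+1) : ℤ) + 1)
      = 4*(k:ℤ)*s*s + 2*(k:ℤ)*s + ((s:ℤ)+1)*(2*(k:ℤ)-1-u) + (s:ℤ)*u + 2*s + 1 := by
  have hc1 : ((2*k-1-u:ℕ):ℤ) = 2*(k:ℤ)-1-u := by omega
  have hpt : ∀ j ∈ Finset.range (2*s+1), ((cell s k j (2*u+1) : ℤ) + 1)
      = (4*(k:ℤ)*s + 1 + ((u:ℤ) + ((2*(k:ℤ)-1-u) - (u:ℤ)) * (if smP s (k-1-u) (2*s-j) then (1:ℤ) else 0)))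
        - 2*(k:ℤ)*j := by
    intro j hj
    rw [Finset.mem_range] at hj
    have hc3 : ((2*s-j:ℕ):ℤ) = 2*(s:ℤ) - j := by omega
    unfold cell alf
    rw [if_neg (by omega : ¬((2*u+1)%2 = 0)), bet_odd]
    rw [← ite_lin]
    by_cases h1 : smP s (k-1-u) (2*s-j) <;>
      simp only [h1, if_true, if_false] <;> push_cast <;> (try simp only [hc1, hc3]) <;> ring
  have h2 : ∑ j ∈ Finset.range (2*s+1),
      (((2*(k:ℤ)-1-u) - (u:ℤ)) * (if smP s (k-1-u) (2*s-j) then (1:ℤ) else 0))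
      = ((2*(k:ℤ)-1-u) - (u:ℤ)) * ((s:ℤ)+1) := by
    rw [← Finset.mul_sum, count_sm_ref s (k-1-u) hs]
  have h3 : ∑ j ∈ Finset.range (2*s+1), (2*(k:ℤ)*j) = 2*(k:ℤ)*((s:ℤ)*(2*s+1)) := by
    rw [← Finset.mul_sum, sum_id_odd]
  rw [Finset.sum_congr rfl hpt, Finset.sum_sub_distrib, Finset.sum_add_distrib,
      Finset.sum_add_distrib, Finset.sum_add_distrib, h2, h3,
      Finset.sum_const, Finset.sum_const, Finset.sum_const, Finset.card_range]
  push_cast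
  ring


def rowlab (s k j : ℕ) : ℕ := (2*s+1)*(2*k) + 2*s - j

def collab (s k t : ℕ) : ℕ :=
  (2*s+1)*(2*k) + (2*s+1) + (if t % 2 = 1 then t/2 else 2*k-1-t/2)

lemma rowlab_sum (s k : ℕ) :
    ∑ j ∈ Finset.range (2*s+1), ((rowlab s k j : ℤ) + 1)
      = (2*(s:ℤ)+1)*((2*(s:ℤ)+1)*(2*(k:ℤ))) + (2*(s:ℤ)+1)*((s:ℤ)+1) := by
  set Q := (2*s+1)*(2*k) with hQ
  have hQZ : ((Q:ℕ):ℤ) = (2*(s:ℤ)+1)*(2*(k:ℤ)) := by rw [hQ]; push_cast; ring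
  have hpt : ∀ j ∈ Finset.range (2*s+1), ((rowlab s k j : ℤ) + 1)
      = (((Q:ℕ):ℤ) + 2*(s:ℤ) + 1) - (j:ℤ) := by
    intro j hj
    rw [Finset.mem_range] at hj
    unfold rowlab
    have h : ((Q + 2*s - j :ℕ):ℤ) = ((Q:ℕ):ℤ) + 2*(s:ℤ) - j := by omega
    rw [h]; ring
  rw [Finset.sum_congr rfl hpt, Finset.sum_sub_distrib, sum_id_odd,
      Finset.sum_const, Finset.card_range, hQZ]
  push_cast; ring

lemma collab_sum (s k : ℕ) :
    ∑ t ∈ Finset.range (2*k), ((collab s k t : ℤ) + 1)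
      = (k:ℤ)*(2*((2*(s:ℤ)+1)*(2*(k:ℤ))) + 2*(2*(s:ℤ)+1) + 2*(k:ℤ) + 1) := by
  set Q := (2*s+1)*(2*k) with hQ
  have hQZ : ((Q:ℕ):ℤ) = (2*(s:ℤ)+1)*(2*(k:ℤ)) := by rw [hQ]; push_cast; ring
  rw [sum_pairup (fun t => ((collab s k t : ℤ) + 1)) k]
  have hpt : ∀ u ∈ Finset.range k,
      (((collab s k (2*u) : ℤ) + 1) + ((collab s k (2*u+1) : ℤ) + 1))
      = 2*((Q:ℕ):ℤ) + 2*(2*(s:ℤ)+1) + 2*(k:ℤ) + 1 := by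
    intro u hu
    rw [Finset.mem_range] at hu
    unfold collab
    rw [if_neg (by omega : ¬((2*u) % 2 = 1)), if_pos (by omega : (2*u+1) % 2 = 1)]
    rw [(by omega : (2*u)/2 = u), (by omega : (2*u+1)/2 = u)]
    have h1 : ((Q + (2*s+1) + (2*k-1-u) :ℕ):ℤ) = ((Q:ℕ):ℤ) + 2*(s:ℤ)+1 + 2*(k:ℤ)-1-(u:ℤ) := by
      omega
    have h2 : ((Q + (2*s+1) + u :ℕ):ℤ) = ((Q:ℕ):ℤ) + 2*(s:ℤ)+1 + (u:ℤ) := by omega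
    rw [h1, h2]; ring
  rw [Finset.sum_congr rfl hpt, Finset.sum_const, Finset.card_range, hQZ]
  push_cast; ring

lemma bet_lt (s k j t : ℕ) (ht : t < 2*k) : bet s k j t < 2*k := by
  unfold bet; split_ifs <;> omega

lemma alf_le (s j t : ℕ) (hj : j ≤ 2*s) : alf s j t ≤ 2*s := by
  unfold alf; split_ifs <;> omega

lemma cell_lt (s k j t : ℕ) (hj : j ≤ 2*s) (ht : t < 2*k) :
    cell s k j t < (2*s+1)*(2*k) := by
  unfold cell
  have h1 := alf_le s j t hj
  have h2 := bet_lt s k j t ht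
  calc 2*k*(alf s j t) + bet s k j t < 2*k*(alf s j t) + 2*k := by omega
    _ ≤ 2*k*(2*s) + 2*k := by
        have := Nat.mul_le_mul_left (2*k) h1; omega
    _ = (2*s+1)*(2*k) := by ring

def NN (s k : ℕ) : ℕ := (2*s+1) + 2*k + (2*s+1)*(2*k)

def gfun (s k : ℕ) :
    (Fin (2*s+1) ⊕ (Fin (2*k) ⊕ (Fin (2*s+1) × Fin (2*k)))) → ℕ
  | Sum.inl j => rowlab s k j.val
  | Sum.inr (Sum.inl t) => collab s k t.val
  | Sum.inr (Sum.inr p) => cell s k p.1.val p.2.val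

lemma gfun_lt (s k : ℕ) (x : Fin (2*s+1) ⊕ (Fin (2*k) ⊕ (Fin (2*s+1) × Fin (2*k)))) :
    gfun s k x < NN s k := by
  rcases x with j | t | p
  · have hj := j.isLt
    show rowlab s k j.val < NN s k
    unfold rowlab NN
    set Q := (2*s+1)*(2*k) with hQ
    omega
  · have ht := t.isLt
    show collab s k t.val < NN s k
    unfold collab NN
    set Q := (2*s+1)*(2*k) with hQ
    split_ifs <;> omega
  · have hj := p.1.isLt
    have ht := p.2.isLt
    show cell s k p.1.val p.2.val < NN s k
    have := cell_lt s k p.1.val p.2.val (by omega) ht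
    unfold NN
    set Q := (2*s+1)*(2*k) with hQ
    omega

lemma cell_inj (s k : ℕ) (j t j' t' : ℕ)
    (hj : j ≤ 2*s) (hj' : j' ≤ 2*s) (ht : t < 2*k) (ht' : t' < 2*k)
    (h : cell s k j t = cell s k j' t') : j = j' ∧ t = t' := by
  have h2k : 0 < 2*k := by omega
  have hb := bet_lt s k j t ht
  have hb' := bet_lt s k j' t' ht'
  have hbet : bet s k j t = bet s k j' t' := by
    unfold cell at h
    have e1 : (2*k*(alf s j t) + bet s k j t) % (2*k) = bet s k j t := by
      rw [Nat.mul_add_mod]; exact Nat.mod_eq_of_lt hb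
    have e2 : (2*k*(alf s j' t') + bet s k j' t') % (2*k) = bet s k j' t' := by
      rw [Nat.mul_add_mod]; exact Nat.mod_eq_of_lt hb'
    rw [← e1, ← e2, h]
  have half : alf s j t = alf s j' t' := by
    unfold cell at h
    have e1 : (2*k*(alf s j t) + bet s k j t) / (2*k) = alf s j t := by
      rw [Nat.mul_add_div h2k, Nat.div_eq_of_lt hb, Nat.add_zero]
    have e2 : (2*k*(alf s j' t') + bet s k j' t') / (2*k) = alf s j' t' := by
      rw [Nat.mul_add_div h2k, Nat.div_eq_of_lt hb', Nat.add_zero]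
    rw [← e1, ← e2, h]
  have hu : t/2 < k := by omega
  have hu' : t'/2 < k := by omega
  rcases (by omega : t = 2*(t/2) ∨ t = 2*(t/2)+1) with h1 | h1 <;>
    rcases (by omega : t' = 2*(t'/2) ∨ t' = 2*(t'/2)+1) with h2 | h2
  · -- even / even
    rw [h1, bet_even] at hbet
    rw [h2] at hbet
    rw [bet_even] at hbet
    have hjj : j = j' := by
      unfold alf at half
      rw [if_pos (by omega : t % 2 = 0), if_pos (by omega : t' % 2 = 0)] at half
      exact half
    refine ⟨hjj, ?_⟩
    subst hjj
    split_ifs at hbet with hA hB <;> omega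
  · -- even / odd
    rw [h1, bet_even] at hbet
    rw [h2] at hbet
    rw [bet_odd] at hbet
    have hjj : j = 2*s - j' := by
      unfold alf at half
      rw [if_pos (by omega : t % 2 = 0), if_neg (by omega : ¬(t' % 2 = 0))] at half
      exact half
    exfalso
    split_ifs at hbet with hA hB hB
    · omega
    · have e3 : k-1-t'/2 = k-1-t/2 := by omega
      have e2 : 2*s - j' = j := by omega
      rw [e3, e2] at hB
      exact hB hA
    · have e3 : k-1-t'/2 = k-1-t/2 := by omega
      have e2 : 2*s - j' = j := by omega
      rw [e3, e2] at hB
      exact hA hB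
    · omega
  · -- odd / even
    rw [h1, bet_odd] at hbet
    rw [h2] at hbet
    rw [bet_even] at hbet
    have hjj : 2*s - j = j' := by
      unfold alf at half
      rw [if_neg (by omega : ¬(t % 2 = 0)), if_pos (by omega : t' % 2 = 0)] at half
      exact half
    exfalso
    split_ifs at hbet with hA hB hB
    · omega
    · have e3 : k-1-t'/2 = k-1-t/2 := by omega
      have e2 : j' = 2*s - j := by omega
      rw [e3, e2] at hB
      exact hB hA
    · have e3 : k-1-t'/2 = k-1-t/2 := by omega
      have e2 : j' = 2*s - j := by omega
      rw [e3, e2] at hB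
      exact hA hB
    · omega
  · -- odd / odd
    rw [h1, bet_odd] at hbet
    rw [h2] at hbet
    rw [bet_odd] at hbet
    have hjj : 2*s - j = 2*s - j' := by
      unfold alf at half
      rw [if_neg (by omega : ¬(t % 2 = 0)), if_neg (by omega : ¬(t' % 2 = 0))] at half
      exact half
    refine ⟨by omega, ?_⟩
    split_ifs at hbet with hA hB <;> omega

lemma gfun_inj (s k : ℕ) (a b : Fin (2*s+1) ⊕ (Fin (2*k) ⊕ (Fin (2*s+1) × Fin (2*k))))
    (h : gfun s k a = gfun s k b) : a = b := by
  have hcelllt : ∀ (j t : ℕ), j ≤ 2*s → t < 2*k → cell s k j t < (2*s+1)*(2*k) :=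
    fun j t hj ht => cell_lt s k j t hj ht
  rcases a with j | t | p <;> rcases b with j' | t' | p'
  · -- row row
    have hj := j.isLt; have hj' := j'.isLt
    simp only [gfun] at h
    unfold rowlab at h
    have : j.val = j'.val := by
      set Q := (2*s+1)*(2*k) with hQ
      omega
    exact congrArg Sum.inl (Fin.ext this)
  · -- row col
    exfalso
    have hj := j.isLt; have ht := t'.isLt
    simp only [gfun] at h
    unfold rowlab collab at h
    set Q := (2*s+1)*(2*k) with hQ
    split_ifs at h <;> omega
  · -- row cell
    exfalso
    have hj := j.isLt
    have := hcelllt p'.1.val p'.2.val (by omega) p'.2.isLt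
    simp only [gfun] at h
    unfold rowlab at h
    set Q := (2*s+1)*(2*k) with hQ
    omega
  · -- col row
    exfalso
    have hj := j'.isLt; have ht := t.isLt
    simp only [gfun] at h
    unfold rowlab collab at h
    set Q := (2*s+1)*(2*k) with hQ
    split_ifs at h <;> omega
  · -- col col
    have ht := t.isLt; have ht' := t'.isLt
    simp only [gfun] at h
    unfold collab at h
    set Q := (2*s+1)*(2*k) with hQ
    have : t.val = t'.val := by
      split_ifs at h <;> omega
    exact congrArg (Sum.inr ∘ Sum.inl) (Fin.ext this)
  · -- col cell
    exfalso
    have ht := t.isLt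
    have := hcelllt p'.1.val p'.2.val (by omega) p'.2.isLt
    simp only [gfun] at h
    unfold collab at h
    set Q := (2*s+1)*(2*k) with hQ
    split_ifs at h <;> omega
  · -- cell row
    exfalso
    have hj := j'.isLt
    have := hcelllt p.1.val p.2.val (by omega) p.2.isLt
    simp only [gfun] at h
    unfold rowlab at h
    set Q := (2*s+1)*(2*k) with hQ
    omega
  · -- cell col
    exfalso
    have ht := t'.isLt
    have := hcelllt p.1.val p.2.val (by omega) p.2.isLt
    simp only [gfun] at h
    unfold collab at h
    set Q := (2*s+1)*(2*k) with hQ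
    split_ifs at h <;> omega
  · -- cell cell
    simp only [gfun] at h
    have hres := cell_inj s k p.1.val p.2.val p'.1.val p'.2.val
      (by omega) (by omega) p.2.isLt p'.2.isLt h
    have : p = p' := by
      apply Prod.ext <;> apply Fin.ext
      · exact hres.1
      · exact hres.2
    exact congrArg (Sum.inr ∘ Sum.inr) this


def c2m (s k : ℕ) : ℕ := 4*s*k*k + 2*k*k + 4*s*k + 3*k + s + 1
def c3m (s k : ℕ) : ℕ := 4*s*s*k + 8*s*k + 4*k + 3*s + 2
def c1m (s k : ℕ) : ℕ :=
  (2*s+1)*((2*s+1)*(2*k)) + (2*s+1)*(s+1) + k*(2*((2*s+1)*(2*k)) + 2*(2*s+1) + 2*k + 1)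

noncomputable def EQV (s k : ℕ) :
    (Fin (2*s+1) ⊕ (Fin (2*k) ⊕ (Fin (2*s+1) × Fin (2*k)))) ≃ Fin ((2*s+1) + 2*k + (2*s+1)*(2*k)) :=
  Equiv.ofBijective (fun x => (⟨gfun s k x, gfun_lt s k x⟩ : Fin ((2*s+1) + 2*k + (2*s+1)*(2*k))))
    (by
      rw [Fintype.bijective_iff_injective_and_card]
      constructor
      · intro a b hab
        exact gfun_inj s k a b (by simpa using congrArg Fin.val hab)
      · simp
        ring)

lemma EQV_row (s k : ℕ) (j : Fin (2*s+1)) :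
    ((EQV s k) (Sum.inl j)).val = rowlab s k j.val := rfl

lemma EQV_col (s k : ℕ) (t : Fin (2*k)) :
    ((EQV s k) (Sum.inr (Sum.inl t))).val = collab s k t.val := rfl

lemma EQV_cell (s k : ℕ) (j : Fin (2*s+1)) (t : Fin (2*k)) :
    ((EQV s k) (Sum.inr (Sum.inr (j, t)))).val = cell s k j.val t.val := rfl

lemma rowlab_cast (s k j : ℕ) (hj : j ≤ 2*s) :
    ((rowlab s k j : ℕ) : ℤ) = (2*(s:ℤ)+1)*(2*(k:ℤ)) + 2*(s:ℤ) - (j:ℤ) := by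
  unfold rowlab
  set Q := (2*s+1)*(2*k) with hQ
  have h : ((Q + 2*s - j :ℕ):ℤ) = ((Q:ℕ):ℤ) + 2*(s:ℤ) - (j:ℤ) := by omega
  rw [h, hQ]
  push_cast; ring

lemma magic_row (s k : ℕ) (hs : 1 ≤ s) (hk : s < k) (j : Fin (2*s+1)) :
    ((rowlab s k j.val) + 1) + (∑ t : Fin (2*k), (cell s k j.val t.val + 1)) = c2m s k := by
  have hj : j.val ≤ 2*s := by have := j.isLt; omega
  rw [Fin.sum_univ_eq_sum_range (fun t => cell s k j.val t + 1) (2*k)]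
  have hz := row_cells s k j.val hs hk hj
  have hcast : ((∑ t ∈ Finset.range (2*k), (cell s k j.val t + 1) : ℕ) : ℤ)
      = ∑ t ∈ Finset.range (2*k), ((cell s k j.val t : ℤ) + 1) := by
    push_cast; rfl
  apply Nat.cast_inj (R := ℤ) |>.mp
  push_cast [hcast]
  rw [hz, rowlab_cast s k j.val hj]
  unfold c2m
  push_cast; ring

lemma magic_col (s k : ℕ) (hs : 1 ≤ s) (hk : s < k) (t : Fin (2*k)) :
    ((collab s k t.val) + 1) + (∑ j : Fin (2*s+1), (cell s k j.val t.val + 1)) = c3m s k := by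
  have ht : t.val < 2*k := t.isLt
  rw [Fin.sum_univ_eq_sum_range (fun j => cell s k j t.val + 1) (2*s+1)]
  apply Nat.cast_inj (R := ℤ) |>.mp
  have hcast : ((∑ j ∈ Finset.range (2*s+1), (cell s k j t.val + 1) : ℕ) : ℤ)
      = ∑ j ∈ Finset.range (2*s+1), ((cell s k j t.val : ℤ) + 1) := by
    push_cast; rfl
  push_cast [hcast]
  have hu : t.val/2 < k := by omega
  set Q := (2*s+1)*(2*k) with hQ
  have hQZ : ((Q:ℕ):ℤ) = (2*(s:ℤ)+1)*(2*(k:ℤ)) := by rw [hQ]; push_cast; ring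
  rcases (by omega : t.val = 2*(t.val/2) ∨ t.val = 2*(t.val/2)+1) with h1 | h1
  · have hcol : ((collab s k t.val : ℕ):ℤ)
        = ((Q:ℕ):ℤ) + 2*(s:ℤ)+1 + (2*(k:ℤ)-1-(t.val/2 : ℕ)) := by
      unfold collab
      rw [if_neg (by omega : ¬(t.val % 2 = 1))]
      omega
    have hsum : ∑ j ∈ Finset.range (2*s+1), ((cell s k j t.val : ℤ) + 1)
        = 4*(k:ℤ)*s*s + 2*(k:ℤ)*s + ((t.val/2 : ℕ):ℤ) + 2*(k:ℤ)*s - s + 2*s + 1 := by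
      conv_lhs => rw [h1]
      exact col_even s k (t.val/2) hs hk hu
    rw [hsum, hcol, hQZ]
    unfold c3m
    push_cast; ring
  · have hcol : ((collab s k t.val : ℕ):ℤ)
        = ((Q:ℕ):ℤ) + 2*(s:ℤ)+1 + ((t.val/2 : ℕ):ℤ) := by
      unfold collab
      rw [if_pos (by omega : t.val % 2 = 1)]
      omega
    have hsum : ∑ j ∈ Finset.range (2*s+1), ((cell s k j t.val : ℤ) + 1)
        = 4*(k:ℤ)*s*s + 2*(k:ℤ)*s + ((s:ℤ)+1)*(2*(k:ℤ)-1-((t.val/2 : ℕ):ℤ)) + (s:ℤ)*((t.val/2 : ℕ):ℤ) + 2*s + 1 := by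
      conv_lhs => rw [h1]
      exact col_odd s k (t.val/2) hs hk hu
    rw [hsum, hcol, hQZ]
    unfold c3m
    push_cast; ring

lemma magic_c1 (s k : ℕ) :
    (∑ j : Fin (2*s+1), (rowlab s k j.val + 1)) + (∑ t : Fin (2*k), (collab s k t.val + 1))
      = c1m s k := by
  rw [Fin.sum_univ_eq_sum_range (fun j => rowlab s k j + 1) (2*s+1)]
  rw [Fin.sum_univ_eq_sum_range (fun t => collab s k t + 1) (2*k)]
  apply Nat.cast_inj (R := ℤ) |>.mp
  have hcast1 : ((∑ j ∈ Finset.range (2*s+1), (rowlab s k j + 1) : ℕ) : ℤ)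
      = ∑ j ∈ Finset.range (2*s+1), ((rowlab s k j : ℤ) + 1) := by push_cast; rfl
  have hcast2 : ((∑ t ∈ Finset.range (2*k), (collab s k t + 1) : ℕ) : ℤ)
      = ∑ t ∈ Finset.range (2*k), ((collab s k t : ℤ) + 1) := by push_cast; rfl
  push_cast [hcast1, hcast2]
  rw [rowlab_sum, collab_sum]
  unfold c1m
  push_cast; ring

lemma c2_gt_c3 (s k : ℕ) (hs : 1 ≤ s) (hk : s < k) : c3m s k < c2m s k := by
  unfold c2m c3m
  have hks : s + 1 ≤ k := hk
  have h1 : 4*s*k*(s+1) ≤ 4*s*k*k := Nat.mul_le_mul_left (4*s*k) hks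
  have h2 : 2*k*(s+1) ≤ 2*k*k := Nat.mul_le_mul_left (2*k) hks
  nlinarith [h1, h2, hs, hks]

lemma c1_gt_c2 (s k : ℕ) (hs : 1 ≤ s) (hk : s < k) : c2m s k < c1m s k := by
  unfold c1m c2m
  zify
  nlinarith [sq_nonneg ((s:ℤ)), sq_nonneg ((k:ℤ)),
    mul_nonneg (mul_nonneg (Int.ofNat_nonneg s) (Int.ofNat_nonneg k)) (Int.ofNat_nonneg k),
    mul_nonneg (mul_nonneg (Int.ofNat_nonneg s) (Int.ofNat_nonneg s)) (Int.ofNat_nonneg k),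
    mul_nonneg (Int.ofNat_nonneg s) (Int.ofNat_nonneg k)]

lemma c1_gt_c3 (s k : ℕ) (hs : 1 ≤ s) (hk : s < k) : c3m s k < c1m s k := by
  have := c2_gt_c3 s k hs hk
  have := c1_gt_c2 s k hs hk
  omega

end Stmt17full

/-- Theorem 2.11 arithmetic and conclusion: the constants of the two labelings of the
`(1, 2s+1, 2k)`-board satisfy `c₁ > c₂`, `c₁ > c₃`, the two labelings cannot both be
degenerate, and the board admits a Cartesian tri-magic design. -/
theorem stmt17 (s k : ℕ) (hs : 1 ≤ s) (hk : s < k) :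
    k * (8 * s * k + 4 * s + 6 * k + 3) + (s + 1) * (2 * s + 1) >
      k * (4 * s * k + 4 * s + 2 * k + 3) + s + 1 ∧
    k * (8 * s * k + 4 * s + 6 * k + 3) + (s + 1) * (2 * s + 1) >
      (s + 1) * (4 * s * k + 4 * s + 4 * k + 3) ∧
    ¬ (k * (4 * s * k + 4 * s + 2 * k + 3) + s + 1 =
        (s + 1) * (4 * s * k + 4 * s + 4 * k + 3) ∧
       k * (4 * s * k + 4 * s + 2 * k + 5) + s + 1 =
        (s + 1) * (4 * s * k + 4 * k + 1)) ∧
    ∃ (e : (Fin (2 * s + 1) ⊕ Fin (2 * k) ⊕ (Fin (2 * s + 1) × Fin (2 * k))) ≃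
        Fin ((2 * s + 1) + 2 * k + (2 * s + 1) * (2 * k))) (c₁ c₂ c₃ : ℕ),
      ((∑ j, ((e (Sum.inl j)).val + 1)) + (∑ t, ((e (Sum.inr (Sum.inl t))).val + 1)) = c₁) ∧
      (∀ j, ((e (Sum.inl j)).val + 1) +
        (∑ t, ((e (Sum.inr (Sum.inr (j, t)))).val + 1)) = c₂) ∧
      (∀ t, ((e (Sum.inr (Sum.inl t))).val + 1) +
        (∑ j, ((e (Sum.inr (Sum.inr (j, t)))).val + 1)) = c₃) ∧
      c₁ ≠ c₂ ∧ c₁ ≠ c₃ ∧ c₂ ≠ c₃ := by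
  refine ⟨?_, ?_, ?_, ?_⟩
  · zify
    nlinarith [mul_nonneg (mul_nonneg (Int.ofNat_nonneg s) (Int.ofNat_nonneg k)) (Int.ofNat_nonneg k),
      sq_nonneg ((k:ℤ)), sq_nonneg ((s:ℤ)), Int.ofNat_nonneg s, Int.ofNat_nonneg k]
  · zify
    have hd : (0:ℤ) ≤ (k:ℤ) - s - 1 := by
      have hsk : (s:ℤ) < k := by exact_mod_cast hk
      linarith
    have hs' : (1:ℤ) ≤ s := by exact_mod_cast hs
    have hk' : (1:ℤ) ≤ k := by exact_mod_cast (by omega : 1 ≤ k)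
    nlinarith [hd, hs', hk',
      mul_nonneg (mul_nonneg (by linarith : (0:ℤ) ≤ s) (by linarith : (0:ℤ) ≤ k)) hd,
      mul_nonneg (mul_nonneg (by linarith : (0:ℤ) ≤ k) (by linarith : (0:ℤ) ≤ k)) hd,
      mul_nonneg hd hd, sq_nonneg ((k:ℤ) - s),
      mul_nonneg (by linarith : (0:ℤ) ≤ s) (by linarith : (0:ℤ) ≤ k)]
  · rintro ⟨h1, h2⟩
    zify at h1 h2
    nlinarith [h1, h2, (show (1:ℤ) ≤ s by exact_mod_cast hs),
      (show (1:ℤ) ≤ k by exact_mod_cast (by omega : 1 ≤ k)),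
      mul_nonneg (Int.ofNat_nonneg s) (Int.ofNat_nonneg k)]
  · refine ⟨Stmt17full.EQV s k, Stmt17full.c1m s k, Stmt17full.c2m s k, Stmt17full.c3m s k,
      ?_, ?_, ?_, ?_, ?_, ?_⟩
    · simp only [Stmt17full.EQV_row, Stmt17full.EQV_col]
      exact Stmt17full.magic_c1 s k
    · intro j
      simp only [Stmt17full.EQV_row, Stmt17full.EQV_cell]
      exact Stmt17full.magic_row s k hs hk j
    · intro t
      simp only [Stmt17full.EQV_col, Stmt17full.EQV_cell]
      exact Stmt17full.magic_col s k hs hk t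
    · exact (Stmt17full.c1_gt_c2 s k hs hk).ne'
    · exact (Stmt17full.c1_gt_c3 s k hs hk).ne'
    · exact (Stmt17full.c2_gt_c3 s k hs hk).ne'
end
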